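/- Let G be a finite group with Sylow p-subgroup P and x ∈ P. If x^G ∩ P = {x}, then for every y in the cyclic subgroup generated by x, we also have y^G ∩ P = {y}. -/

import Mathlib

/-!
Call `x` Sylow-isolated if every Sylow `p`-subgroup contains at most one conjugate of `x`; the
conjugate `a` of `x` lying in a Sylow subgroup `Q` is then central in `Q`. For a conjugate `z ∈ Q`
of `a ^ k` we show `z = a ^ k`, by induction on `|G|` and, inside, on `|Q ∩ C(z)|` from above.
If `Q` centralizes `z`, Burnside's argument conjugates `z` to `a ^ k` by an element of `N_G(Q)`,
and such an element fixes `a`. Otherwise `R = Q ∩ C(z)` is properly contained in a Sylow subgroup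
`S` of `G` lying in `C(z)`, hence, by the normalizer condition, properly in `B = S ∩ N_G(R)`.
Some `ν ∈ N_G(R)` conjugates `R` and `B` into a common Sylow subgroup `Q'`; as
`|Q' ∩ C(z)| ≥ |B| > |R|`, induction gives `z = ν a^k ν⁻¹`. So `z` and `a ^ k` are conjugate in
`N_G(R)`, and the theorem for this smaller group gives `z = a ^ k`; if `R ⊴ G` instead, all
conjugates of `a` lie in `R ≤ Q`, so they equal `a`.
-/

open Subgroup

section

variable {G : Type*} [Group G] {p : ℕ}

theorem Subgroup.card_lt_of_lt [Finite G] {H K : Subgroup G} (h : H < K) :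
    Nat.card H < Nat.card K :=
  (card_le_of_le h.le).lt_of_ne fun hc => h.ne (eq_of_le_of_card_ge h.le hc.ge)

theorem IsPGroup.lt_inf_normalizer [Finite G] [Fact p.Prime] {S R : Subgroup G}
    (hS : IsPGroup p S) (hRS : R < S) : R < S ⊓ normalizer (R : Set G) := by
  have : Group.IsNilpotent S := hS.isNilpotent
  have hlt : R.subgroupOf S < ⊤ :=
    lt_top_iff_ne_top.mpr fun h => hRS.not_ge (subgroupOf_eq_top.mp h)
  have := Group.normalizerCondition_of_isNilpotent _ hlt
  rw [← subgroupOf_normalizer_eq hRS.le,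
    ← map_lt_map_iff_of_injective S.subtype_injective, subgroupOf_map_subtype,
    subgroupOf_map_subtype, inf_eq_left.mpr hRS.le, inf_comm] at this
  exact this

theorem Sylow.mem_smul_iff {P : Sylow p G} {g x : G} : x ∈ g • P ↔ g⁻¹ * x * g ∈ P := by
  change x ∈ ((g • P : Sylow p G) : Subgroup G) ↔ _
  rw [Sylow.coe_subgroup_smul, mem_pointwise_smul_iff_inv_smul_mem, ← map_inv]
  simp only [MulAut.smul_def, MulAut.conj_apply, inv_inv]
  rfl

theorem Sylow.conj_mem_smul {P : Sylow p G} {x : G} (hx : x ∈ P) (g : G) :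
    g * x * g⁻¹ ∈ g • P := by
  rw [Sylow.mem_smul_iff]; group; exact hx

theorem IsPGroup.exists_le_sylow_le [Finite G] [Fact p.Prime] {H R : Subgroup G}
    (hR : IsPGroup p R) (hRH : R ≤ H) (T : Sylow p G) (hT : (T : Subgroup G) ≤ H) :
    ∃ S : Sylow p G, R ≤ S ∧ (S : Subgroup G) ≤ H := by
  obtain ⟨S', hS'⟩ := hR.comap_subtype (K := H) |>.exists_le_sylow
  obtain ⟨c, hc⟩ := MulAction.exists_smul_eq H (T.subtype hT) S'
  refine ⟨c • T, fun r hr => ?_, Sylow.smul_le hT c⟩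
  rw [Sylow.smul_subtype hT c] at hc
  have : (⟨r, hRH hr⟩ : H) ∈ ((c • T).subtype (Sylow.smul_le hT c) : Subgroup H) := by
    rw [hc]; exact hS' hr
  exact this

theorem IsPGroup.exists_conj_le_sylow [Finite G] [Fact p.Prime] {H R B : Subgroup G}
    (hR : IsPGroup p R) (hRH : R ≤ H) (hB : IsPGroup p B) (hBH : B ≤ H) :
    ∃ ν ∈ H, ∃ Q : Sylow p G, B ≤ Q ∧ ∀ r ∈ R, ν * r * ν⁻¹ ∈ Q := by
  obtain ⟨SR, hSR⟩ := hR.comap_subtype (K := H) |>.exists_le_sylow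
  obtain ⟨SB, hSB⟩ := hB.comap_subtype (K := H) |>.exists_le_sylow
  obtain ⟨ν, hν⟩ := MulAction.exists_smul_eq H SR SB
  obtain ⟨Q, hQ⟩ := (SB.isPGroup'.map H.subtype).exists_le_sylow
  refine ⟨ν, ν.2, Q, fun b hb => hQ ⟨⟨b, hBH hb⟩, hSB hb, rfl⟩, fun r hr => hQ ?_⟩
  refine ⟨ν * ⟨r, hRH hr⟩ * ν⁻¹, ?_, rfl⟩
  rw [← hν]
  exact Sylow.conj_mem_smul (hSR hr) ν

theorem Subgroup.centralizer_singleton_le_zpow (g : G) (k : ℤ) :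
    centralizer {g} ≤ centralizer {g ^ k} := fun u hu => by
  rw [mem_centralizer_singleton_iff] at hu ⊢
  exact (Commute.zpow_right hu k)

def IsSylowIsolated (p : ℕ) (x : G) : Prop :=
  ∀ Q : Sylow p G, ({z | IsConj x z} ∩ (Q : Set G)).Subsingleton

namespace IsSylowIsolated

variable {x a : G}

theorem of_subsingleton [Finite G] [Fact p.Prime] (P : Sylow p G)
    (h : ({z | IsConj x z} ∩ (P : Set G)).Subsingleton) : IsSylowIsolated p x := by
  intro Q
  obtain ⟨g, rfl⟩ := MulAction.exists_smul_eq G P Q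
  rintro u ⟨hu, huQ⟩ v ⟨hv, hvQ⟩
  have hconj : ∀ w : G, IsConj w (g⁻¹ * w * g) := fun w =>
    isConj_iff.mpr ⟨g⁻¹, by rw [inv_inv]⟩
  have := h ⟨hu.trans (hconj u), Sylow.mem_smul_iff.mp huQ⟩
    ⟨hv.trans (hconj v), Sylow.mem_smul_iff.mp hvQ⟩
  simpa using this

theorem of_isConj (hx : IsSylowIsolated p x) (h : IsConj x a) : IsSylowIsolated p a :=
  fun Q _ hu _ hv => hx Q ⟨h.trans hu.1, hu.2⟩ ⟨h.trans hv.1, hv.2⟩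

theorem conj_eq (hx : IsSylowIsolated p x) {Q : Sylow p G} (hxQ : x ∈ Q) (g : G)
    (hg : g * x * g⁻¹ ∈ Q) : g * x * g⁻¹ = x :=
  hx Q ⟨isConj_iff.mpr ⟨g, rfl⟩, hg⟩ ⟨IsConj.refl x, hxQ⟩

theorem le_centralizer (hx : IsSylowIsolated p x) {Q : Sylow p G} (hxQ : x ∈ Q) :
    (Q : Subgroup G) ≤ centralizer {x} := fun u hu => by
  rw [mem_centralizer_singleton_iff, ← mul_inv_eq_iff_eq_mul]
  exact hx.conj_eq hxQ u (mul_mem (mul_mem hu hxQ) (inv_mem hu))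

theorem subgroup (hx : IsSylowIsolated p x) (H : Subgroup G) (hxH : x ∈ H) :
    IsSylowIsolated p (⟨x, hxH⟩ : H) := by
  rintro T u ⟨hu, huT⟩ v ⟨hv, hvT⟩
  obtain ⟨Q, hQ⟩ := (T.isPGroup'.map H.subtype).exists_le_sylow
  exact Subtype.ext <| hx Q ⟨H.subtype.map_isConj hu, hQ ⟨u, huT, rfl⟩⟩
    ⟨H.subtype.map_isConj hv, hQ ⟨v, hvT, rfl⟩⟩

theorem exists_sylow_le_centralizer (ha : IsSylowIsolated p a) {Q : Sylow p G} (haQ : a ∈ Q)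
    {k : ℤ} {z : G} (hz : IsConj (a ^ k) z) :
    ∃ T : Sylow p G, (T : Subgroup G) ≤ centralizer {z} := by
  obtain ⟨g, rfl⟩ := isConj_iff.mp hz
  refine ⟨g • Q, fun u hu => ?_⟩
  rw [← conj_zpow]
  exact centralizer_singleton_le_zpow _ k <|
    (ha.of_isConj (isConj_iff.mpr ⟨g, rfl⟩)).le_centralizer (Sylow.conj_mem_smul haQ g) hu

theorem eq_zpow_of_le_centralizer [Finite G] [Fact p.Prime] (ha : IsSylowIsolated p a)
    {Q : Sylow p G} (haQ : a ∈ Q) {k : ℤ} {z : G} (hz : IsConj (a ^ k) z)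
    (hQz : (Q : Subgroup G) ≤ centralizer {z}) : z = a ^ k := by
  obtain ⟨g, rfl⟩ := isConj_iff.mp hz
  have hak : a ^ k ∈ centralizer (Q : Set G) := fun u hu => mem_centralizer_singleton_iff.mp
    (centralizer_singleton_le_zpow a k (ha.le_centralizer haQ hu))
  have hz' : g⁻¹⁻¹ * a ^ k * g⁻¹ ∈ centralizer (Q : Set G) := by
    rw [inv_inv]
    exact fun u hu => mem_centralizer_singleton_iff.mp (hQz hu)
  obtain ⟨n, hn, hgn⟩ := Q.conj_eq_normalizer_conj_of_mem_centralizer (a ^ k) g⁻¹ hak hz'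
  have hna : n⁻¹ * a * n⁻¹⁻¹ = a :=
    ha.conj_eq haQ n⁻¹ ((mem_normalizer_iff.mp (inv_mem hn) a).mp haQ)
  have hnak : n⁻¹ * a ^ k * n⁻¹⁻¹ = a ^ k := by rw [← conj_zpow, hna]
  rw [inv_inv] at hgn hnak
  rw [hgn, hnak]

theorem eq_zpow_of_normal (ha : IsSylowIsolated p a) {Q : Sylow p G} {K : Subgroup G}
    (hK : K.Normal) (hKQ : K ≤ Q) (haK : a ∈ K) {k : ℤ} {z : G} (hz : IsConj (a ^ k) z) :
    z = a ^ k := by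
  obtain ⟨g, rfl⟩ := isConj_iff.mp hz
  rw [← conj_zpow, ha.conj_eq (hKQ haK) g (hKQ (hK.conj_mem a haK g))]

/-- `hind` is `IsSylowIsolated.zpow` for the proper subgroups of `G`. -/
theorem eq_zpow_of_isConj [Finite G] [Fact p.Prime] (k : ℤ)
    (hind : ∀ H : Subgroup G, H ≠ ⊤ → ∀ y : H, IsSylowIsolated p y →
      ∀ S : Sylow p H, y ∈ S → IsSylowIsolated p (y ^ k))
    {a : G} (ha : IsSylowIsolated p a) (Q : Sylow p G) (haQ : a ∈ Q) {z : G}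
    (hz : IsConj (a ^ k) z) (hzQ : z ∈ Q) : z = a ^ k := by
  by_cases hQz : (Q : Subgroup G) ≤ centralizer {z}
  · exact ha.eq_zpow_of_le_centralizer haQ hz hQz
  set R := (Q : Subgroup G) ⊓ centralizer {z} with hR
  have haR : a ∈ R := ⟨haQ, mem_centralizer_singleton_iff.mpr
    (mem_centralizer_singleton_iff.mp (ha.le_centralizer haQ hzQ)).symm⟩
  have hzR : z ∈ R := ⟨hzQ, mem_centralizer_singleton_iff.mpr rfl⟩
  by_cases hN : normalizer (R : Set G) = ⊤
  · exact ha.eq_zpow_of_normal (normalizer_eq_top_iff.mp hN) inf_le_left haR hz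
  have hRQ : R < Q := inf_le_left.lt_of_ne fun h => hQz (h ▸ inf_le_right)
  have hRp : IsPGroup p R := Q.isPGroup'.to_le inf_le_left
  obtain ⟨T, hTz⟩ := ha.exists_sylow_le_centralizer haQ hz
  obtain ⟨S, hRS, hSz⟩ := hRp.exists_le_sylow_le inf_le_right T hTz
  have hRS' : R < S := hRS.lt_of_ne fun h => (card_lt_of_lt hRQ).ne <| by
    rw [h, S.card_eq_multiplicity, Q.card_eq_multiplicity]
  have hRB := S.isPGroup'.lt_inf_normalizer hRS'
  obtain ⟨ν, hνN, Q', hBQ', hRQ'⟩ := IsPGroup.exists_conj_le_sylow hRp le_normalizer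
    S.isPGroup'.to_inf_left inf_le_right
  have hcard : Nat.card R < Nat.card ↥((Q' : Subgroup G) ⊓ centralizer {z}) :=
    (card_lt_of_lt hRB).trans_le (card_le_of_le (le_inf hBQ' (inf_le_left.trans hSz)))
  have hz' : z = ν * a ^ k * ν⁻¹ := by
    rw [← conj_zpow]
    refine (ha.of_isConj (isConj_iff.mpr ⟨ν, rfl⟩)).eq_zpow_of_isConj k hind Q' (hRQ' a haR)
      ?_ (hBQ' (hRB.le hzR))
    rw [conj_zpow]
    exact (isConj_iff.mpr ⟨ν, rfl⟩).symm.trans hz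
  obtain ⟨U, hU⟩ := (hRp.comap_subtype (K := normalizer (R : Set G))).exists_le_sylow
  have hzU : (⟨z, le_normalizer hzR⟩ : normalizer (R : Set G)) ∈ U := hU hzR
  exact congrArg Subtype.val <| hind _ hN ⟨a, le_normalizer haR⟩ (ha.subgroup _ _) U (hU haR) U
    ⟨isConj_iff.mpr ⟨⟨ν, hνN⟩, Subtype.ext hz'.symm⟩, hzU⟩ ⟨IsConj.refl _, zpow_mem (hU haR) k⟩
termination_by Nat.card G - Nat.card ↥((Q : Subgroup G) ⊓ centralizer {z})
decreasing_by
  have := card_le_card_group ((Q' : Subgroup G) ⊓ centralizer {z})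
  rw [← hR]
  omega

end IsSylowIsolated

end

-- `G` is not a section variable here: the recursion passes to subgroups of `G`.
theorem IsSylowIsolated.zpow {G : Type*} [Group G] [Finite G] {p : ℕ} [Fact p.Prime] {x : G}
    (hx : IsSylowIsolated p x) (P : Sylow p G) (hxP : x ∈ P) (k : ℤ) :
    IsSylowIsolated p (x ^ k) := by
  intro Q
  obtain ⟨g, rfl⟩ := MulAction.exists_smul_eq G P Q
  have hxa : IsConj x (g * x * g⁻¹) := isConj_iff.mpr ⟨g, rfl⟩
  have hxak : IsConj (x ^ k) ((g * x * g⁻¹) ^ k) := isConj_iff.mpr ⟨g, conj_zpow.symm⟩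
  have heq_zpow : ∀ w ∈ {w | IsConj (x ^ k) w} ∩ ((g • P : Sylow p G) : Set G),
      w = (g * x * g⁻¹) ^ k := fun w ⟨hw, hwQ⟩ =>
    (hx.of_isConj hxa).eq_zpow_of_isConj k
      (fun H hH y hy S hyS => hy.zpow S hyS k) _ (Sylow.conj_mem_smul hxP g)
      (hxak.symm.trans hw) hwQ
  exact fun u hu v hv => (heq_zpow u hu).trans (heq_zpow v hv).symm
termination_by Nat.card G
decreasing_by
  exact card_lt_of_lt (lt_top_iff_ne_top.mpr hH) |>.trans_eq card_top

theorem stmt_4 {G : Type*} [Group G] [Finite G] (p : ℕ) [Fact p.Prime]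
    (P : Sylow p G) (x : G) (hx : x ∈ (P : Subgroup G))
    (h : {z : G | IsConj x z} ∩ (P : Subgroup G) = {x}) :
    ∀ y ∈ Subgroup.zpowers x, {z : G | IsConj y z} ∩ (P : Subgroup G) = {y} := by
  have hiso : IsSylowIsolated p x := .of_subsingleton P (h ▸ Set.subsingleton_singleton)
  intro y hy
  obtain ⟨k, rfl⟩ := mem_zpowers_iff.mp hy
  exact (hiso.zpow P hx k P).eq_singleton_of_mem ⟨IsConj.refl _, zpow_mem hx k⟩
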